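/- arXiv:2312.15945 — 3 statements merged into one kernel-verified Lean document; each statement's English description precedes it below -/
import Mathlib

section
/- If f(z) = Σ_{n≥0} a_n z^n is analytic on the unit disk D with |f(z)| ≤ 1 for all z ∈ D, then Σ_{n≥0} |a_n| r^n ≤ 1 for all 0 ≤ r ≤ 1/3. -/
open Metric Set Complex Finset Function
open scoped ENNReal NNReal

lemma mobius_norm_lt (u v : ℂ) (hu : ‖u‖ < 1) (hv : ‖v‖ < 1) :
    ‖u - v‖ < ‖1 - (starRingEnd ℂ u) * v‖ := by
  have key : Complex.normSq (1 - (starRingEnd ℂ u) * v) - Complex.normSq (u - v)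
      = (1 - Complex.normSq u) * (1 - Complex.normSq v) := by
    simp only [Complex.normSq_apply, Complex.sub_re, Complex.sub_im, Complex.mul_re,
      Complex.mul_im, Complex.conj_re, Complex.conj_im, Complex.one_re, Complex.one_im]
    ring
  have h1 : Complex.normSq u < 1 := by
    rw [Complex.normSq_eq_norm_sq]; nlinarith [norm_nonneg u]
  have h2 : Complex.normSq v < 1 := by
    rw [Complex.normSq_eq_norm_sq]; nlinarith [norm_nonneg v]
  have hlt : Complex.normSq (u - v) < Complex.normSq (1 - (starRingEnd ℂ u) * v) := by
    nlinarith [key]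
  calc ‖u - v‖ = Real.sqrt (Complex.normSq (u - v)) := by
        rw [Complex.norm_def]
    _ < Real.sqrt (Complex.normSq (1 - (starRingEnd ℂ u) * v)) :=
        Real.sqrt_lt_sqrt (Complex.normSq_nonneg _) hlt
    _ = ‖1 - (starRingEnd ℂ u) * v‖ := by rw [Complex.norm_def]

/-- Schwarz–Pick coefficient bound: `‖c 1‖ ≤ 1 - ‖c 0‖²`. -/
lemma coeff_one_bound (c : ℕ → ℂ) (H : ℂ → ℂ)
    (hsum : ∀ w : ℂ, ‖w‖ < 1 → HasSum (fun m => c m * w ^ m) (H w))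
    (hb : ∀ w : ℂ, ‖w‖ < 1 → ‖H w‖ ≤ 1) : ‖c 1‖ ≤ 1 - ‖c 0‖ ^ 2 := by
  have hH0 : H 0 = c 0 := by
    have h1 := hsum 0 (by norm_num)
    have h2 : HasSum (fun m => c m * (0:ℂ) ^ m) (c 0) := by
      have := hasSum_single (f := fun m => c m * (0:ℂ) ^ m) 0 (by
        intro b hb'
        simp [zero_pow hb'])
      simpa using this
    exact h1.unique h2
  set p : FormalMultilinearSeries ℂ ℂ ℂ :=
    fun n => ContinuousMultilinearMap.mkPiRing ℂ (Fin n) (c n) with hp_def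
  have hpnorm : ∀ n, ‖p n‖ = ‖c n‖ := fun n =>
    ContinuousMultilinearMap.norm_mkPiRing (c n)
  have hradius : 1 ≤ p.radius := by
    apply ENNReal.le_of_forall_nnreal_lt
    intro s hs
    have hs1 : (s : ℝ) < 1 := by exact_mod_cast hs
    have hs0 : (0:ℝ) ≤ s := s.coe_nonneg
    have hsummable := (hsum (s : ℂ) (by
      simpa [RCLike.norm_ofReal, _root_.abs_of_nonneg hs0] using hs1)).summable
    have htend := hsummable.tendsto_atTop_zero.norm
    obtain ⟨C, hC⟩ := htend.bddAbove_range
    apply p.le_radius_of_bound C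
    intro n
    have := hC ⟨n, rfl⟩
    simpa [hpnorm, norm_mul, norm_pow, RCLike.norm_ofReal, _root_.abs_of_nonneg hs0] using this
  have hps : HasFPowerSeriesOnBall H p 0 1 := by
    refine ⟨hradius, by norm_num, ?_⟩
    intro y hy
    rw [mem_emetric_ball_zero_iff] at hy
    have hy' : ‖y‖ < 1 := by exact_mod_cast (show (‖y‖₊ : ℝ≥0∞) < 1 from hy)
    simp only [zero_add]
    exact (hsum y hy').congr_fun fun n => by
      simp [hp_def, ContinuousMultilinearMap.mkPiRing_apply, mul_comm]
  have hderiv : deriv H 0 = c 1 := by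
    rw [hps.hasFPowerSeriesAt.deriv]
    simp [FormalMultilinearSeries.coeff, hp_def, ContinuousMultilinearMap.mkPiRing_apply]
  have hball : Metric.eball (0:ℂ) 1 = ball (0:ℂ) 1 := by
    rw [show ((1:ℝ≥0∞)) = ((1:NNReal):ℝ≥0∞) by norm_num, Metric.eball_coe]
    norm_num
  have hdiff : DifferentiableOn ℂ H (ball 0 1) := by
    have := hps.differentiableOn
    rwa [hball] at this
  have hmem : ∀ w : ℂ, w ∈ ball (0:ℂ) 1 ↔ ‖w‖ < 1 := by
    intro w; simp [mem_ball, dist_eq_norm]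
  by_cases hex : ∃ w ∈ ball (0:ℂ) 1, ‖H w‖ = 1
  · obtain ⟨w, hw, hw1⟩ := hex
    have hmax : IsMaxOn (norm ∘ H) (ball 0 1) w := fun x hx => by
      simp only [Set.mem_setOf_eq, Function.comp_apply, hw1]
      exact hb x ((hmem x).1 hx)
    have heq := Complex.eqOn_of_isPreconnected_of_isMaxOn_norm
      (convex_ball (0:ℂ) 1).isPreconnected isOpen_ball hdiff hw hmax
    have hc1 : c 1 = 0 := by
      rw [← hderiv]
      have hev : H =ᶠ[nhds (0:ℂ)] fun _ => H w := by
        filter_upwards [isOpen_ball.mem_nhds (mem_ball_self one_pos)] with x hx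
        exact heq hx
      rw [hev.deriv_eq]
      simp
    have hc0 : ‖c 0‖ ≤ 1 := by rw [← hH0]; exact hb 0 (by norm_num)
    rw [hc1, norm_zero]
    nlinarith [norm_nonneg (c 0)]
  · push_neg at hex
    have hHlt : ∀ w : ℂ, ‖w‖ < 1 → ‖H w‖ < 1 := fun w hw =>
      lt_of_le_of_ne (hb w hw) (hex w ((hmem w).2 hw))
    have hc0 : ‖c 0‖ < 1 := by rw [← hH0]; exact hHlt 0 (by norm_num)
    set k : ℂ := starRingEnd ℂ (c 0) with hk_def
    have hdenom : ∀ w : ℂ, ‖w‖ < 1 → 1 - k * H w ≠ 0 := by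
      intro w hw h0
      have hlt := mobius_norm_lt (c 0) (H w) hc0 (hHlt w hw)
      rw [← hk_def, h0, norm_zero] at hlt
      exact absurd hlt (not_lt.2 (norm_nonneg _))
    set M : ℂ → ℂ := fun w => (c 0 - H w) / (1 - k * H w) with hM_def
    have hMdiff : DifferentiableOn ℂ M (ball 0 1) := by
      apply DifferentiableOn.div
      · exact (differentiableOn_const _).sub hdiff
      · exact (differentiableOn_const _).sub ((differentiableOn_const _).mul hdiff)
      · intro w hw; exact hdenom w ((hmem w).1 hw)
    have hM0 : M 0 = 0 := by simp [hM_def, hH0]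
    have hmaps : MapsTo M (ball 0 1) (ball (M 0) 1) := by
      intro w hw
      rw [hM0, hmem]
      have hw' : ‖w‖ < 1 := (hmem w).1 hw
      have hh : ‖H w‖ < 1 := hHlt w hw'
      have hd0 : 1 - k * H w ≠ 0 := hdenom w hw'
      simp only [hM_def, norm_div]
      rw [div_lt_one (norm_pos_iff.2 hd0)]
      exact mobius_norm_lt (c 0) (H w) hc0 hh
    have hschwarz := Complex.norm_deriv_le_div_of_mapsTo_ball hMdiff (hmaps.mono_right ball_subset_closedBall) one_pos
    -- compute deriv M 0
    have hHd : HasDerivAt H (c 1) 0 := by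
      have := (hdiff.differentiableAt
        (isOpen_ball.mem_nhds (mem_ball_self one_pos))).hasDerivAt
      rwa [hderiv] at this
    have hv0 : 1 - k * H 0 ≠ 0 := hdenom 0 (by norm_num)
    have hu : HasDerivAt (fun w => c 0 - H w) (0 - c 1) 0 :=
      (hasDerivAt_const 0 (c 0)).sub hHd
    have hv : HasDerivAt (fun w => 1 - k * H w) (0 - k * c 1) 0 :=
      (hasDerivAt_const 0 1).sub (hHd.const_mul k)
    have hMd := hu.fun_div hv hv0
    have hd : (1:ℂ) - k * c 0 ≠ 0 := by rwa [← hH0]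
    have hMderiv : deriv M 0 = -(c 1) / (1 - k * c 0) := by
      rw [hMd.deriv, hH0]
      field_simp
      ring
    rw [hMderiv] at hschwarz
    have hkc : k * c 0 = ((Complex.normSq (c 0) : ℝ) : ℂ) := by
      rw [hk_def, mul_comm, Complex.mul_conj]
    have hns : Complex.normSq (c 0) = ‖c 0‖ ^ 2 := by
      rw [Complex.normSq_eq_norm_sq]
    have hnormd : ‖1 - k * c 0‖ = 1 - ‖c 0‖ ^ 2 := by
      rw [hkc, show (1:ℂ) - ((Complex.normSq (c 0) : ℝ) : ℂ)
          = (((1 - Complex.normSq (c 0) : ℝ)) : ℂ) by push_cast; ring,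
        Complex.norm_real, Real.norm_eq_abs,
        _root_.abs_of_nonneg (by nlinarith [hns, norm_nonneg (c 0), hc0]), hns]
    rw [norm_div, norm_neg, hnormd] at hschwarz
    have hpos : (0:ℝ) < 1 - ‖c 0‖ ^ 2 := by nlinarith [norm_nonneg (c 0)]
    rw [div_le_div_iff₀ hpos one_pos] at hschwarz
    linarith

set_option maxHeartbeats 1000000 in
/-- Classical Bohr inequality. -/
theorem bohr_inequality (f : ℂ → ℂ) (a : ℕ → ℂ)
    (hf : ∀ z : ℂ, ‖z‖ < 1 → HasSum (fun n => a n * z ^ n) (f z))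
    (hbd : ∀ z : ℂ, ‖z‖ < 1 → ‖f z‖ ≤ 1)
    (r : ℝ) (hr0 : 0 ≤ r) (hr : r ≤ 1 / 3) :
    ∑' n : ℕ, ‖a n‖ * r ^ n ≤ 1 := by
  have ha0f : f 0 = a 0 := by
    have h1 := hf 0 (by norm_num)
    have h2 : HasSum (fun n => a n * (0:ℂ) ^ n) (a 0) := by
      have := hasSum_single (f := fun n => a n * (0:ℂ) ^ n) 0
        (by intro b hb'; simp [zero_pow hb'])
      simpa using this
    exact h1.unique h2
  have ha0 : ‖a 0‖ ≤ 1 := ha0f ▸ hbd 0 (by norm_num)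
  have hsummable : ∀ s : ℝ, 0 ≤ s → s < 1 → Summable (fun m => ‖a m‖ * s ^ m) := by
    intro s hs0 hs1
    obtain ⟨t, hst, ht1, ht0⟩ : ∃ t : ℝ, s < t ∧ t < 1 ∧ 0 < t :=
      ⟨(s + 1) / 2, by linarith, by linarith, by linarith⟩
    have hsum := (hf (t : ℂ) (by
      rw [Complex.norm_real, Real.norm_eq_abs, _root_.abs_of_nonneg ht0.le]
      exact ht1)).summable
    obtain ⟨C, hC⟩ := hsum.tendsto_atTop_zero.norm.bddAbove_range
    have hgeo : Summable (fun m : ℕ => C * (s / t) ^ m) :=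
      (summable_geometric_of_lt_one (by positivity)
        (by rw [div_lt_one ht0]; exact hst)).mul_left C
    apply Summable.of_nonneg_of_le (fun m => by positivity) (fun m => ?_) hgeo
    have hCm : ‖a m‖ * t ^ m ≤ C := by
      have := hC ⟨m, rfl⟩
      simpa [norm_mul, norm_pow, Complex.norm_real, Real.norm_eq_abs,
        _root_.abs_of_nonneg ht0.le] using this
    have htm : (0:ℝ) < t ^ m := by positivity
    calc ‖a m‖ * s ^ m = (‖a m‖ * t ^ m) * (s / t) ^ m := by
          rw [div_pow, mul_assoc, mul_div_assoc', mul_div_cancel_left₀ _ htm.ne']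
      _ ≤ C * (s / t) ^ m := mul_le_mul_of_nonneg_right hCm (by positivity)
  have key : ∀ n : ℕ, 1 ≤ n → ‖a n‖ ≤ 1 - ‖a 0‖ ^ 2 := by
    intro n hn
    have hn0 : n ≠ 0 := by omega
    set ζ : ℂ := Complex.exp (2 * Real.pi * Complex.I / n) with hζ_def
    have hζ : IsPrimitiveRoot ζ n := Complex.isPrimitiveRoot_exp n hn0
    have hζ1 : ‖ζ‖ = 1 := by
      rw [hζ_def, Complex.norm_exp]
      rw [show (2 * (Real.pi:ℝ) * Complex.I / n : ℂ) = ((2 * Real.pi / n : ℝ) : ℂ) * Complex.I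
        by push_cast; ring]
      simp
    have hζj : ∀ j : ℕ, ∀ z : ℂ, ‖z‖ < 1 → ‖ζ ^ j * z‖ < 1 := by
      intro j z hz
      rw [norm_mul, norm_pow, hζ1, one_pow, one_mul]; exact hz
    have hroot : ∀ m : ℕ, ∑ j ∈ Finset.range n, (ζ ^ m) ^ j
        = if n ∣ m then (n : ℂ) else 0 := by
      intro m
      by_cases hd : n ∣ m
      · have h1 : ζ ^ m = 1 := (hζ.pow_eq_one_iff_dvd m).2 hd
        simp [h1, hd]
      · have hne : ζ ^ m ≠ 1 := fun h => hd ((hζ.pow_eq_one_iff_dvd m).1 h)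
        rw [geom_sum_eq hne, if_neg hd]
        have h2 : (ζ ^ m) ^ n = 1 := by
          rw [← pow_mul, mul_comm, pow_mul, hζ.pow_eq_one, one_pow]
        rw [h2]; simp
    set c : ℕ → ℂ := fun m => a (n * m) with hc_def
    have hinj : Function.Injective (fun m : ℕ => n * m) := fun x y h =>
      Nat.eq_of_mul_eq_mul_left (Nat.pos_of_ne_zero hn0) h
    have hGsummable : ∀ w : ℂ, ‖w‖ < 1 → Summable (fun m => c m * w ^ m) := by
      intro w hw
      obtain ⟨s, hs0, hs1, hsn⟩ : ∃ s : ℝ, 0 ≤ s ∧ s < 1 ∧ ‖w‖ ≤ s ^ n := by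
        refine ⟨‖w‖ ^ ((n:ℝ)⁻¹), Real.rpow_nonneg (norm_nonneg w) _,
          Real.rpow_lt_one (norm_nonneg w) hw (by positivity), ?_⟩
        rw [← Real.rpow_natCast (‖w‖ ^ ((n:ℝ)⁻¹)) n, ← Real.rpow_mul (norm_nonneg w),
          inv_mul_cancel₀ (by exact_mod_cast hn0 : (n:ℝ) ≠ 0), Real.rpow_one]
      have hsub : Summable ((fun m => ‖a m‖ * s ^ m) ∘ (fun m : ℕ => n * m)) :=
        (hsummable s hs0 hs1).comp_injective hinj
      apply Summable.of_norm
      apply Summable.of_nonneg_of_le (fun m => norm_nonneg _) (fun m => ?_) hsub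
      rw [norm_mul, norm_pow]
      have h3 : ‖w‖ ^ m ≤ (s ^ n) ^ m := pow_le_pow_left₀ (norm_nonneg w) hsn m
      rw [← pow_mul] at h3
      exact mul_le_mul_of_nonneg_left h3 (norm_nonneg _)
    set G : ℂ → ℂ := fun w => ∑' m, c m * w ^ m with hG_def
    have hGsum : ∀ w : ℂ, ‖w‖ < 1 → HasSum (fun m => c m * w ^ m) (G w) :=
      fun w hw => (hGsummable w hw).hasSum
    have havg : ∀ z : ℂ, ‖z‖ < 1 → ‖G (z ^ n)‖ ≤ 1 := by
      intro z hz
      have hzn : ‖z ^ n‖ < 1 := by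
        rw [norm_pow]; exact pow_lt_one₀ (norm_nonneg z) hz hn0
      have hrot : ∀ j ∈ Finset.range n,
          HasSum (fun m => (n:ℂ)⁻¹ * (a m * (ζ ^ j * z) ^ m)) ((n:ℂ)⁻¹ * f (ζ ^ j * z)) :=
        fun j _ => (hf _ (hζj j z hz)).mul_left _
      have hsumsum := hasSum_sum hrot
      have hfun : ∀ m, (∑ j ∈ Finset.range n, (n:ℂ)⁻¹ * (a m * (ζ ^ j * z) ^ m))
          = if n ∣ m then a m * z ^ m else 0 := by
        intro m
        have h4 : ∀ j, (n:ℂ)⁻¹ * (a m * (ζ ^ j * z) ^ m)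
            = ((n:ℂ)⁻¹ * (a m * z ^ m)) * (ζ ^ m) ^ j := by
          intro j
          rw [mul_pow, ← pow_mul, mul_comm j m, pow_mul]
          ring
        rw [Finset.sum_congr rfl (fun j _ => h4 j), ← Finset.mul_sum, hroot m]
        by_cases hd : n ∣ m
        · rw [if_pos hd, if_pos hd]
          have : ((n:ℂ)) ≠ 0 := Nat.cast_ne_zero.2 hn0
          field_simp
        · rw [if_neg hd, if_neg hd, mul_zero]
      have hS : HasSum (fun m => if n ∣ m then a m * z ^ m else 0)
          (∑ j ∈ Finset.range n, (n:ℂ)⁻¹ * f (ζ ^ j * z)) :=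
        hsumsum.congr_fun fun m => (hfun m).symm
      have hsupp : ∀ m ∉ Set.range (fun m : ℕ => n * m),
          (if n ∣ m then a m * z ^ m else 0) = 0 := by
        intro m hm
        rw [if_neg]
        rintro ⟨q, hq⟩
        exact hm ⟨q, hq.symm⟩
      have hcomp := (hinj.hasSum_iff hsupp).2 hS
      have hcomp' : HasSum (fun m => c m * (z ^ n) ^ m)
          (∑ j ∈ Finset.range n, (n:ℂ)⁻¹ * f (ζ ^ j * z)) := by
        refine hcomp.congr_fun fun m => ?_
        have hd : n ∣ n * m := Dvd.intro m rfl
        simp only [Function.comp_apply, if_pos hd, hc_def, ← pow_mul]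
      have hGeq : G (z ^ n) = ∑ j ∈ Finset.range n, (n:ℂ)⁻¹ * f (ζ ^ j * z) :=
        (hGsum (z ^ n) hzn).unique hcomp'
      rw [hGeq]
      calc ‖∑ j ∈ Finset.range n, (n:ℂ)⁻¹ * f (ζ ^ j * z)‖
          ≤ ∑ j ∈ Finset.range n, ‖(n:ℂ)⁻¹ * f (ζ ^ j * z)‖ := norm_sum_le _ _
        _ ≤ ∑ j ∈ Finset.range n, (n:ℝ)⁻¹ := by
            apply Finset.sum_le_sum
            intro j _
            rw [norm_mul]
            have h1 : ‖((n:ℂ))⁻¹‖ = (n:ℝ)⁻¹ := by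
              rw [norm_inv]; norm_num
            rw [h1]
            calc (n:ℝ)⁻¹ * ‖f (ζ ^ j * z)‖ ≤ (n:ℝ)⁻¹ * 1 :=
                  mul_le_mul_of_nonneg_left (hbd _ (hζj j z hz)) (by positivity)
              _ = (n:ℝ)⁻¹ := mul_one _
        _ = 1 := by
            rw [Finset.sum_const, Finset.card_range, nsmul_eq_mul]
            field_simp
    have hGbd : ∀ w : ℂ, ‖w‖ < 1 → ‖G w‖ ≤ 1 := by
      intro w hw
      obtain ⟨z, hz⟩ := IsAlgClosed.exists_pow_nat_eq w (Nat.pos_of_ne_zero hn0)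
      have hzlt : ‖z‖ < 1 := by
        by_contra hle
        push_neg at hle
        have h5 : (1:ℝ) ≤ ‖z‖ ^ n := by
          calc (1:ℝ) = 1 ^ n := (one_pow n).symm
            _ ≤ ‖z‖ ^ n := pow_le_pow_left₀ zero_le_one hle n
        rw [← norm_pow, hz] at h5
        linarith
      rw [← hz]
      exact havg z hzlt
    have hfinal := coeff_one_bound c G hGsum hGbd
    simpa [hc_def, mul_one, mul_zero] using hfinal
  -- final arithmetic
  have hr1 : r < 1 := by linarith
  have hS : Summable (fun m => ‖a m‖ * r ^ m) := hsummable r hr0 hr1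
  have hshift : Summable (fun m : ℕ => ‖a (m + 1)‖ * r ^ (m + 1)) :=
    (summable_nat_add_iff 1).2 hS
  have hgeo2 : Summable (fun m : ℕ => (1 - ‖a 0‖ ^ 2) * (r ^ (m + 1))) := by
    apply Summable.mul_left
    exact ((summable_geometric_of_lt_one hr0 hr1).mul_left r).congr (fun m => by ring)
  rw [Summable.tsum_eq_zero_add hS]
  have hbound : ∑' m : ℕ, ‖a (m + 1)‖ * r ^ (m + 1)
      ≤ ∑' m : ℕ, (1 - ‖a 0‖ ^ 2) * r ^ (m + 1) := by
    apply Summable.tsum_le_tsum _ hshift hgeo2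
    intro m
    exact mul_le_mul_of_nonneg_right (key (m + 1) (by omega)) (by positivity)
  have hgeoval : ∑' m : ℕ, (1 - ‖a 0‖ ^ 2) * r ^ (m + 1)
      = (1 - ‖a 0‖ ^ 2) * (r * (1 - r)⁻¹) := by
    rw [tsum_mul_left]
    congr 1
    have : ∀ m : ℕ, r ^ (m + 1) = r * r ^ m := fun m => by ring
    rw [tsum_congr this, tsum_mul_left, tsum_geometric_of_lt_one hr0 hr1]
  have hhalf : r * (1 - r)⁻¹ ≤ 1 / 2 := by
    rw [← div_eq_mul_inv, div_le_iff₀ (by linarith : (0:ℝ) < 1 - r)]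
    linarith
  have h2 : (1 - ‖a 0‖ ^ 2) * (r * (1 - r)⁻¹) ≤ (1 - ‖a 0‖ ^ 2) * (1 / 2) := by
    apply mul_le_mul_of_nonneg_left hhalf
    nlinarith [norm_nonneg (a 0)]
  have hrineq : ‖a 0‖ * r ^ 0 + ∑' m : ℕ, ‖a (m + 1)‖ * r ^ (m + 1)
      ≤ ‖a 0‖ + (1 - ‖a 0‖ ^ 2) * (1 / 2) := by
    rw [pow_zero, mul_one]
    have := hbound.trans (le_of_eq hgeoval) |>.trans h2
    linarith
  refine hrineq.trans ?_
  nlinarith [norm_nonneg (a 0), ha0]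
end

section
/- The constant 1/3 in Bohr's inequality is optimal: for every r with 1/3 < r < 1 there exists an analytic function f on the unit disk with |f| ≤ 1 whose Taylor coefficients a_n satisfy Σ_{n≥0} |a_n| r^n > 1. -/
/-- Sharpness of the Bohr radius 1/3. -/
theorem bohr_radius_sharp (r : ℝ) (hr1 : 1 / 3 < r) (hr2 : r < 1) :
    ∃ (f : ℂ → ℂ) (a : ℕ → ℂ),
      (∀ z : ℂ, ‖z‖ < 1 → HasSum (fun n => a n * z ^ n) (f z)) ∧
      (∀ z : ℂ, ‖z‖ < 1 → ‖f z‖ ≤ 1) ∧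
      1 < ∑' n : ℕ, ‖a n‖ * r ^ n := by
  have hr0 : 0 < r := by linarith
  obtain ⟨α, hα0, hα1, hαr, hkey⟩ :
      ∃ α : ℝ, 0 < α ∧ α < 1 ∧ α * r < 1 ∧ 1 < r * (1 + 2 * α) := by
    refine ⟨(1 + r) / (4 * r), by positivity, ?_, ?_, ?_⟩
    · rw [div_lt_one (by positivity)]; linarith
    · have h : (1 + r) / (4 * r) * r = (1 + r) / 4 := by field_simp
      rw [h]; linarith
    · have h : r * (1 + 2 * ((1 + r) / (4 * r))) = r + (1 + r) / 2 := by
        field_simp; ring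
      rw [h]; linarith
  refine ⟨fun z => ((α : ℂ) - z) / (1 - (α : ℂ) * z),
    fun n => if n = 0 then (α : ℂ) else (α : ℂ) ^ (n + 1) - (α : ℂ) ^ (n - 1), ?_, ?_, ?_⟩
  · intro z hz
    have hnz : ‖(α : ℂ) * z‖ < 1 := by
      rw [norm_mul, Complex.norm_real]
      calc ‖α‖ * ‖z‖ ≤ ‖α‖ * 1 := mul_le_mul_of_nonneg_left hz.le (norm_nonneg _)
        _ < 1 := by rw [mul_one, Real.norm_eq_abs, abs_of_pos hα0]; exact hα1
    have hne : (1 : ℂ) - (α : ℂ) * z ≠ 0 := by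
      intro h
      have h' : (1 : ℂ) = (α : ℂ) * z := by linear_combination h
      rw [← h'] at hnz; simp at hnz
    have h1 : HasSum (fun n : ℕ => ((α : ℂ) * z) ^ n) (1 - (α : ℂ) * z)⁻¹ :=
      hasSum_geometric_of_norm_lt_one hnz
    have h2 : HasSum (fun n : ℕ => (α : ℂ) * ((α : ℂ) * z) ^ n)
        ((α : ℂ) * (1 - (α : ℂ) * z)⁻¹) := h1.mul_left _
    have h3 : HasSum (fun n : ℕ => z * ((α : ℂ) * z) ^ n)
        (z * (1 - (α : ℂ) * z)⁻¹) := h1.mul_left _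
    have h4 : HasSum (fun n : ℕ => if n = 0 then 0 else z * ((α : ℂ) * z) ^ (n - 1))
        (z * (1 - (α : ℂ) * z)⁻¹) := by
      have := (hasSum_nat_add_iff
        (f := fun n : ℕ => if n = 0 then 0 else z * ((α : ℂ) * z) ^ (n - 1)) 1).mp
        (by simpa using h3)
      simpa using this
    have h5 := h2.sub h4
    have heq : (fun n : ℕ =>
        (if n = 0 then (α : ℂ) else (α : ℂ) ^ (n + 1) - (α : ℂ) ^ (n - 1)) * z ^ n)
        = fun n : ℕ => (α : ℂ) * ((α : ℂ) * z) ^ n -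
          (if n = 0 then 0 else z * ((α : ℂ) * z) ^ (n - 1)) := by
      funext n
      cases n with
      | zero => simp
      | succ m =>
        simp only [Nat.succ_ne_zero, if_false, Nat.add_sub_cancel, mul_pow]
        ring
    rw [heq]
    convert h5 using 1
    · rfl
    simp only [div_eq_mul_inv, sub_mul]
  · intro z hz
    have hnz : ‖(α : ℂ) * z‖ < 1 := by
      rw [norm_mul, Complex.norm_real]
      calc ‖α‖ * ‖z‖ ≤ ‖α‖ * 1 := mul_le_mul_of_nonneg_left hz.le (norm_nonneg _)
        _ < 1 := by rw [mul_one, Real.norm_eq_abs, abs_of_pos hα0]; exact hα1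
    have hne : (1 : ℂ) - (α : ℂ) * z ≠ 0 := by
      intro h
      have h' : (1 : ℂ) = (α : ℂ) * z := by linear_combination h
      rw [← h'] at hnz; simp at hnz
    rw [norm_div, div_le_one (norm_pos_iff.mpr hne)]
    have hz2 : z.re ^ 2 + z.im ^ 2 < 1 := by
      have h1 : ‖z‖ ^ 2 = z.re ^ 2 + z.im ^ 2 := by
        rw [Complex.sq_norm, Complex.normSq_apply]; ring
      nlinarith [norm_nonneg z]
    have key : Complex.normSq ((α : ℂ) - z) ≤ Complex.normSq (1 - (α : ℂ) * z) := by
      simp only [Complex.normSq_apply, Complex.sub_re, Complex.sub_im, Complex.mul_re,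
        Complex.mul_im, Complex.ofReal_re, Complex.ofReal_im, Complex.one_re, Complex.one_im]
      have h1α : 0 < 1 - α ^ 2 := by nlinarith
      nlinarith [mul_pos h1α (by linarith : (0:ℝ) < 1 - (z.re ^ 2 + z.im ^ 2))]
    have := Real.sqrt_le_sqrt key
    simpa [Complex.norm_def] using this
  · have g1 : HasSum (fun n : ℕ => (α * r) ^ n) (1 - α * r)⁻¹ :=
      hasSum_geometric_of_lt_one (by positivity) hαr
    have g2 : HasSum (fun n : ℕ => (1 - α ^ 2) * r * (α * r) ^ n)
        ((1 - α ^ 2) * r * (1 - α * r)⁻¹) := g1.mul_left _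
    have g3 : HasSum (fun n : ℕ => if n = 0 then α else (1 - α ^ 2) * r * (α * r) ^ (n - 1))
        ((1 - α ^ 2) * r * (1 - α * r)⁻¹ + α) := by
      have := (hasSum_nat_add_iff
        (f := fun n : ℕ => if n = 0 then α else (1 - α ^ 2) * r * (α * r) ^ (n - 1)) 1).mp
        (by simpa using g2)
      simpa using this
    have heq : (fun n : ℕ =>
        ‖(if n = 0 then (α : ℂ) else (α : ℂ) ^ (n + 1) - (α : ℂ) ^ (n - 1))‖ * r ^ n)
        = fun n : ℕ => if n = 0 then α else (1 - α ^ 2) * r * (α * r) ^ (n - 1) := by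
      funext n
      cases n with
      | zero => simp [Complex.norm_real, abs_of_pos hα0]
      | succ m =>
        have hle : α ^ (m + 2) ≤ α ^ m := pow_le_pow_of_le_one hα0.le hα1.le (by omega)
        have hc : (α : ℂ) ^ (m + 1 + 1) - (α : ℂ) ^ m
            = ((α ^ (m + 2) - α ^ m : ℝ) : ℂ) := by push_cast; ring
        simp only [Nat.succ_ne_zero, if_false, Nat.add_sub_cancel]
        rw [hc, Complex.norm_real, Real.norm_eq_abs,
          abs_of_nonpos (by linarith : α ^ (m + 2) - α ^ m ≤ 0), mul_pow]
        ring
    rw [heq, g3.tsum_eq]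
    have hpos : 0 < 1 - α * r := by linarith
    have h2 : (1 - α) * (1 - α * r) < (1 - α ^ 2) * r := by
      nlinarith [mul_lt_mul_of_pos_left hkey (by linarith : (0:ℝ) < 1 - α)]
    have h3 : 1 - α < (1 - α ^ 2) * r * (1 - α * r)⁻¹ := by
      rw [← div_eq_mul_inv, lt_div_iff₀ hpos]
      exact h2
    linarith
end

section
/- Let h(z) = Σ_{n≥0} a_n z^n and g(z) = Σ_{n≥1} b_n z^n be analytic on the unit disk with Re h(z) ≤ 1 on D, h(0) = a_0 ∈ (0,1), and |g'(z)| ≤ k|h'(z)| on D for some 0 ≤ k < 1. Then for |z| = r ≤ 1/(5 + 2k): |h(z)| + Σ_{n≥1}(|a_n| + |b_n|) r^n ≤ 1. -/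
open Metric Set Filter
open scoped ENNReal NNReal Topology

noncomputable section BohrAux
variable {c d : ℕ → ℂ} {f : ℂ → ℂ}

/-- `BRep c f`: the power series with coefficients `c` converges to `f` on the unit ball. -/
def BRep (c : ℕ → ℂ) (f : ℂ → ℂ) : Prop :=
  ∀ z : ℂ, ‖z‖ < 1 → HasSum (fun n => c n * z ^ n) (f z)

lemma BRep.radius (hc : BRep c f) : 1 ≤ (FormalMultilinearSeries.ofScalars ℂ c).radius := by
  refine ENNReal.le_of_forall_nnreal_lt fun r hr => ?_
  apply FormalMultilinearSeries.le_radius_of_tendsto (l := 0)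
  have hr1 : ‖((r : ℝ) : ℂ)‖ < 1 := by
    simp only [Complex.norm_real, Real.norm_eq_abs, abs_of_nonneg r.coe_nonneg]
    exact_mod_cast hr
  have := ((hc _ hr1).summable.tendsto_atTop_zero).norm
  simp only [norm_zero] at this
  convert this using 2 with n
  rw [FormalMultilinearSeries.ofScalars_norm, norm_mul, norm_pow]
  simp [abs_of_nonneg r.coe_nonneg]

lemma BRep.hasFPowerSeriesOnBall (hc : BRep c f) :
    HasFPowerSeriesOnBall f (FormalMultilinearSeries.ofScalars ℂ c) 0 1 := by
  refine ⟨hc.radius, one_pos, fun {y} hy => ?_⟩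
  rw [mem_emetric_ball_zero_iff] at hy
  have hy' : ‖y‖ < 1 := by rw [← ofReal_norm, ENNReal.ofReal_lt_one] at hy; exact hy
  have := hc y hy'
  simp only [FormalMultilinearSeries.ofScalars_apply_eq, smul_eq_mul, zero_add]
  exact this

lemma BRep.analyticOnNhd (hc : BRep c f) : AnalyticOnNhd ℂ f (ball (0:ℂ) 1) := by
  intro z hz
  have := hc.hasFPowerSeriesOnBall.analyticAt_of_mem (by
    rw [mem_emetric_ball_zero_iff, ← ofReal_norm, ENNReal.ofReal_lt_one]; simpa using hz)
  exact this

lemma BRep.summable_norm (hc : BRep c f) {z : ℂ} (hz : ‖z‖ < 1) :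
    Summable (fun n => ‖c n * z ^ n‖) := by
  have h1 : (‖z‖₊ : ℝ≥0∞) < (FormalMultilinearSeries.ofScalars ℂ c).radius :=
    lt_of_lt_of_le (by exact_mod_cast hz) hc.radius
  have := (FormalMultilinearSeries.ofScalars ℂ c).summable_norm_mul_pow h1
  convert this using 2 with n
  rw [FormalMultilinearSeries.ofScalars_norm, norm_mul, norm_pow]
  simp

lemma ofScalars_coeff (c : ℕ → ℂ) (n : ℕ) :
    (FormalMultilinearSeries.ofScalars ℂ c).coeff n = c n := by
  show (FormalMultilinearSeries.ofScalars ℂ c n) (fun _ => (1:ℂ)) = c n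
  rw [FormalMultilinearSeries.ofScalars_apply_eq]
  simp

lemma BRep.unique (hc : BRep c f) (hd : BRep d f) : c = d := by
  have h1 := hc.hasFPowerSeriesOnBall.hasFPowerSeriesAt
  have h2 := hd.hasFPowerSeriesOnBall.hasFPowerSeriesAt
  have := h1.eq_formalMultilinearSeries h2
  funext n
  have := congrFun this n
  have h3 := congrArg (fun (m : ContinuousMultilinearMap ℂ (fun _ : Fin n => ℂ) ℂ) =>
    m (fun _ => 1)) this
  simp only [FormalMultilinearSeries.ofScalars_apply_eq, smul_eq_mul, one_pow, mul_one] at h3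
  exact h3

end BohrAux

noncomputable section BohrAux2
variable {c d : ℕ → ℂ} {f g : ℂ → ℂ}

lemma brep_of_differentiableOn (hf : DifferentiableOn ℂ f (ball (0:ℂ) 1)) :
    ∃ c : ℕ → ℂ, BRep c f := by
  classical
  have key : ∀ ρ : NNReal, 0 < ρ → (ρ : ℝ) < 1 →
      HasFPowerSeriesOnBall f (cauchyPowerSeries f 0 ρ) 0 ρ := by
    intro ρ h0 h1
    exact (hf.mono (closedBall_subset_ball (by simpa using h1))).hasFPowerSeriesOnBall h0
  refine ⟨fun n => (cauchyPowerSeries f 0 ((1:NNReal)/2)).coeff n, ?_⟩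
  intro z hz
  set ρ : NNReal := ⟨(‖z‖ + 1)/2, by positivity⟩ with hρ
  have hρ0 : 0 < ρ := by
    rw [← NNReal.coe_lt_coe]
    show (0:ℝ) < (‖z‖+1)/2
    positivity
  have hρ1 : (ρ : ℝ) < 1 := by
    show (‖z‖+1)/2 < 1
    linarith
  have hzρ : ‖z‖ < (ρ : ℝ) := by
    show ‖z‖ < (‖z‖+1)/2
    linarith
  have h2 := key ρ hρ0 hρ1
  have h3 := key ((1:NNReal)/2) (by norm_num) (by norm_num)
  have heq : cauchyPowerSeries f 0 ((1:NNReal)/2) = cauchyPowerSeries f 0 ρ :=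
    h3.hasFPowerSeriesAt.eq_formalMultilinearSeries h2.hasFPowerSeriesAt
  have h4 := h2.hasSum (y := z) (by
    rw [mem_emetric_ball_zero_iff]
    exact_mod_cast hzρ)
  rw [zero_add] at h4
  refine h4.congr_fun fun n => ?_
  rw [heq, FormalMultilinearSeries.apply_eq_pow_smul_coeff, smul_eq_mul, mul_comm]

lemma BRep.deriv (hc : BRep c f) :
    BRep (fun n => ((n:ℂ)+1) * c (n+1)) (_root_.deriv f) := by
  intro z hz
  have hball := hc.hasFPowerSeriesOnBall.fderiv
  rcases eq_or_ne z 0 with rfl | hz0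
  · have hd : _root_.deriv f 0 = c 1 := by
      have := hc.hasFPowerSeriesOnBall.hasFPowerSeriesAt.deriv
      simpa [ofScalars_coeff] using this
    have : ∀ n : ℕ, n ≠ 0 → ((n:ℂ)+1) * c (n+1) * (0:ℂ) ^ n = 0 := by
      intro n hn
      rw [zero_pow hn, mul_zero]
    have h5 := hasSum_single (f := fun n : ℕ => ((n:ℂ)+1) * c (n+1) * (0:ℂ) ^ n) 0 this
    simpa [hd] using h5
  · have hz' : z ∈ Metric.eball (0:ℂ) 1 := by
      rw [mem_emetric_ball_zero_iff, ← ofReal_norm, ENNReal.ofReal_lt_one]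
      exact_mod_cast hz
    have H := hball.hasSum hz'
    rw [zero_add] at H
    have H1 := (ContinuousLinearMap.apply ℂ ℂ (1:ℂ)).hasSum H
    have hterm : ∀ n, (((FormalMultilinearSeries.ofScalars ℂ c).derivSeries n fun _ => z) (1:ℂ))
        = ((n:ℂ)+1) * c (n+1) * z ^ n := by
      intro n
      have hdiag := (FormalMultilinearSeries.ofScalars ℂ c).derivSeries_apply_diag n z
      have hlin : (((FormalMultilinearSeries.ofScalars ℂ c).derivSeries n fun _ => z) z)
          = z * (((FormalMultilinearSeries.ofScalars ℂ c).derivSeries n fun _ => z) (1:ℂ)) := by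
        have := ((FormalMultilinearSeries.ofScalars ℂ c).derivSeries n fun _ => z).map_smul z (1:ℂ)
        simpa [smul_eq_mul] using this
      rw [hdiag, FormalMultilinearSeries.ofScalars_apply_eq] at hlin
      have : z * (((FormalMultilinearSeries.ofScalars ℂ c).derivSeries n fun _ => z) (1:ℂ))
          = z * (((n:ℂ)+1) * c (n+1) * z ^ n) := by
        rw [← hlin, nsmul_eq_mul, smul_eq_mul, pow_succ]
        push_cast
        ring
      exact mul_left_cancel₀ hz0 this
    simp only [ContinuousLinearMap.apply_apply] at H1
    have H2 := H1.congr_fun (fun n => (hterm n).symm)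
    rwa [fderiv_apply_one_eq_deriv] at H2

lemma BRep.mul (hc : BRep c f) (hd : BRep d g) :
    BRep (fun n => ∑ j ∈ Finset.range (n+1), c j * d (n - j)) (fun z => f z * g z) := by
  intro z hz
  have H := hasSum_sum_range_mul_of_summable_norm (hc.summable_norm hz) (hd.summable_norm hz)
  rw [(hc z hz).tsum_eq, (hd z hz).tsum_eq] at H
  refine H.congr_fun fun n => ?_
  rw [Finset.sum_mul]
  refine Finset.sum_congr rfl fun j hj => ?_
  have hj' : j ≤ n := Nat.lt_succ_iff.mp (Finset.mem_range.mp hj)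
  have hzz : z ^ n = z ^ j * z ^ (n - j) := by rw [← pow_add, Nat.add_sub_cancel' hj']
  rw [hzz]
  ring


lemma BRep.map_zero (hc : BRep c f) : f 0 = c 0 := by
  have h1 := hc 0 (by norm_num)
  have h2 := hasSum_single (f := fun n : ℕ => c n * (0:ℂ) ^ n) 0
    (by intro b hb; simp [zero_pow hb])
  simpa using h1.unique h2

lemma BRep.deriv_zero (hc : BRep c f) : _root_.deriv f 0 = c 1 := by
  have := hc.hasFPowerSeriesOnBall.hasFPowerSeriesAt.deriv
  simpa [ofScalars_coeff] using this

lemma BRep.hasDerivAt_zero (hc : BRep c f) : HasDerivAt f (c 1) 0 := by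
  have := hc.hasFPowerSeriesOnBall.hasFPowerSeriesAt.hasDerivAt
  have h2 : (FormalMultilinearSeries.ofScalars ℂ c 1) (fun _ => (1:ℂ)) = c 1 := ofScalars_coeff c 1
  rwa [h2] at this

lemma BRep.differentiableOn (hc : BRep c f) : DifferentiableOn ℂ f (ball (0:ℂ) 1) :=
  fun z hz => (hc.analyticOnNhd z hz).differentiableAt.differentiableWithinAt

lemma caratheodory_one (hc : BRep c f) (hre : ∀ z : ℂ, ‖z‖ < 1 → 0 ≤ (f z).re)
    (him : (c 0).im = 0) : ‖c 1‖ ≤ 2 * (c 0).re := by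
  set t : ℝ := (c 0).re with ht
  have hc0 : (c 0 : ℂ) = (t : ℂ) := by
    apply Complex.ext <;> simp [him, ht]
  have hf0 : f 0 = (t:ℂ) := by rw [hc.map_zero, hc0]
  have ht0 : 0 ≤ t := by
    have := hre 0 (by norm_num)
    rw [hf0] at this
    simpa using this
  have key : ∀ ε : ℝ, 0 < ε → ‖c 1‖ ≤ 2*t + 2*ε := by
    intro ε hε
    set D : ℂ → ℂ := fun z => f z + (t:ℂ) + 2*(ε:ℂ) with hDdef
    have hDre : ∀ z, (D z).re = (f z).re + t + 2*ε := by
      intro z; simp [hDdef]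
    have hD : ∀ z, ‖z‖ < 1 → D z ≠ 0 := by
      intro z hz h0
      have h1 : (D z).re = 0 := by rw [h0]; simp
      rw [hDre z] at h1
      have := hre z hz
      linarith
    set φ : ℂ → ℂ := fun z => ((t:ℂ) - f z) / D z with hφdef
    have hdf : DifferentiableOn ℂ f (ball (0:ℂ) 1) := hc.differentiableOn
    have hdφ : DifferentiableOn ℂ φ (ball (0:ℂ) 1) := by
      apply DifferentiableOn.div
      · exact (differentiableOn_const _).sub hdf
      · exact (hdf.add_const _).add_const _
      · intro z hz
        exact hD z (by simpa [dist_zero_right] using hz)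
    have hD0 : D 0 = ((2*t + 2*ε : ℝ) : ℂ) := by
      rw [hDdef]
      simp only [hf0]
      push_cast
      ring
    have hD0ne : D 0 ≠ 0 := hD 0 (by norm_num)
    have hφ0 : φ 0 = 0 := by
      rw [hφdef]
      simp only [hf0, sub_self]
      simp
    have hmaps : MapsTo φ (ball (0:ℂ) 1) (ball (φ 0) 1) := by
      rw [hφ0]
      intro z hz
      rw [mem_ball, dist_zero_right] at hz ⊢
      rw [hφdef]
      rw [norm_div, div_lt_one (norm_pos_iff.mpr (hD z hz))]
      have h1 : 0 ≤ (f z).re := hre z hz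
      have hsq : ‖(t:ℂ) - f z‖^2 < ‖D z‖^2 := by
        rw [Complex.sq_norm, Complex.sq_norm, Complex.normSq_apply, Complex.normSq_apply]
        have e1 : ((t:ℂ) - f z).re = t - (f z).re := by simp
        have e2 : ((t:ℂ) - f z).im = -(f z).im := by simp
        have e3 : (D z).im = (f z).im := by simp [hDdef]
        rw [e1, e2, e3, hDre z]
        nlinarith [h1, ht0, hε]
      nlinarith [norm_nonneg ((t:ℂ) - f z), norm_nonneg (D z)]
    have hS := Complex.norm_deriv_le_div_of_mapsTo_ball hdφ (hmaps.mono_right ball_subset_closedBall) one_pos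
    have hder := hc.hasDerivAt_zero
    have hnum : HasDerivAt (fun z => (t:ℂ) - f z) (-(c 1)) 0 := hder.const_sub _
    have hden : HasDerivAt D (c 1) 0 := (hder.add_const _).add_const _
    have hdiv : HasDerivAt φ ((-c 1 * D 0 - ((t:ℂ) - f 0) * c 1) / D 0 ^ 2) 0 :=
      hnum.div hden hD0ne
    have hval : _root_.deriv φ 0 = -(c 1) / D 0 := by
      rw [hdiv.deriv]
      rw [hf0] at *
      field_simp
      ring
    rw [hval] at hS
    rw [norm_div, norm_neg, hD0] at hS
    have hDnorm : ‖((2*t + 2*ε : ℝ) : ℂ)‖ = 2*t + 2*ε := by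
      rw [Complex.norm_real, Real.norm_eq_abs, abs_of_nonneg (by linarith)]
    rw [hDnorm] at hS
    rw [div_le_div_iff₀ (by linarith) one_pos] at hS
    linarith
  refine le_of_forall_pos_le_add fun ε hε => ?_
  have := key (ε/2) (by linarith)
  linarith

lemma caratheodory (hc : BRep c f) (hre : ∀ z : ℂ, ‖z‖ < 1 → 0 ≤ (f z).re)
    (him : (c 0).im = 0) (n : ℕ) (hn : 1 ≤ n) : ‖c n‖ ≤ 2 * (c 0).re := by
  classical
  have hn0 : n ≠ 0 := by omega
  set η : ℂ := Complex.exp (2 * Real.pi * Complex.I / n) with hη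
  have hηprim : IsPrimitiveRoot η n := Complex.isPrimitiveRoot_exp n hn0
  have hηnorm : ‖η‖ = 1 := by
    rw [hη, Complex.norm_exp]
    have : (2 * Real.pi * Complex.I / n).re = 0 := by
      simp [Complex.div_re]
    rw [this, Real.exp_zero]
  -- the injection m ↦ n * m
  have hinj : Function.Injective (fun m : ℕ => n * m) :=
    fun x y hxy => by simpa [Nat.mul_right_cancel_iff (by omega : 0 < n)] using
      (Nat.eq_of_mul_eq_mul_left (by omega) hxy)
  -- summability of the subsequence series
  have hsub : ∀ w : ℂ, ‖w‖ < 1 → Summable (fun m : ℕ => c (n * m) * w ^ m) := by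
    intro w hw
    obtain ⟨ζ, hζ⟩ := IsAlgClosed.exists_pow_nat_eq w (n := n) (by omega)
    have hζn : ‖ζ‖ < 1 := by
      by_contra hcon
      push_neg at hcon
      have : (1:ℝ) ≤ ‖ζ‖ ^ n := one_le_pow₀ hcon
      rw [← norm_pow, hζ] at this
      linarith
    have h1 : Summable (fun m : ℕ => c m * ζ ^ m) := (hc ζ hζn).summable
    have h2 := h1.comp_injective hinj
    refine h2.congr fun m => ?_
    simp only [Function.comp_apply]
    rw [pow_mul, hζ]
  set χ : ℂ → ℂ := fun w => ∑' m : ℕ, c (n * m) * w ^ m with hχ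
  have hχrep : BRep (fun m => c (n * m)) χ := fun w hw => (hsub w hw).hasSum
  -- value of χ via averaging
  have havg : ∀ w : ℂ, ‖w‖ < 1 → 0 ≤ (χ w).re := by
    intro w hw
    obtain ⟨ζ, hζ⟩ := IsAlgClosed.exists_pow_nat_eq w (n := n) (by omega)
    have hζn : ‖ζ‖ < 1 := by
      by_contra hcon
      push_neg at hcon
      have : (1:ℝ) ≤ ‖ζ‖ ^ n := one_le_pow₀ hcon
      rw [← norm_pow, hζ] at this
      linarith
    have hηζ : ∀ j : ℕ, ‖η ^ j * ζ‖ < 1 := by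
      intro j
      rw [norm_mul, norm_pow, hηnorm, one_pow, one_mul]
      exact hζn
    have hA : HasSum (fun m : ℕ => ∑ j ∈ Finset.range n, c m * (η ^ j * ζ) ^ m)
        (∑ j ∈ Finset.range n, f (η ^ j * ζ)) :=
      hasSum_sum fun j _ => hc (η ^ j * ζ) (hηζ j)
    have hB : HasSum (fun m : ℕ => if n ∣ m then (n:ℂ) * (c m * ζ ^ m) else 0)
        ((n:ℂ) * χ w) := by
      have h1 := ((hsub w hw).hasSum).mul_left (n:ℂ)
      refine (Function.Injective.hasSum_iff hinj ?_).mp ?_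
      · intro m hm
        rw [if_neg]
        rintro ⟨x, rfl⟩
        exact hm ⟨x, rfl⟩
      · refine h1.congr_fun fun m => ?_
        simp only [Function.comp_apply]
        rw [if_pos ⟨m, rfl⟩, pow_mul, hζ]
    have hAB : ∀ m : ℕ, (∑ j ∈ Finset.range n, c m * (η ^ j * ζ) ^ m)
        = if n ∣ m then (n:ℂ) * (c m * ζ ^ m) else 0 := by
      intro m
      have hterm : ∀ j : ℕ, c m * (η ^ j * ζ) ^ m = c m * ζ ^ m * ((η ^ m) ^ j) := by
        intro j
        rw [mul_pow, ← pow_mul, ← pow_mul, mul_comm j m]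
        ring
      rw [Finset.sum_congr rfl fun j _ => hterm j, ← Finset.mul_sum]
      by_cases hd : n ∣ m
      · have : η ^ m = 1 := (hηprim.pow_eq_one_iff_dvd m).mpr hd
        rw [if_pos hd, this]
        simp [mul_comm]
      · have hne : η ^ m ≠ 1 := fun hcon => hd ((hηprim.pow_eq_one_iff_dvd m).mp hcon)
        rw [if_neg hd, geom_sum_eq hne]
        rw [← pow_mul, mul_comm m n, pow_mul, hηprim.pow_eq_one, one_pow]
        simp
    have hkey : (∑ j ∈ Finset.range n, f (η ^ j * ζ)) = (n:ℂ) * χ w :=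
      (hA.congr_fun fun m => (hAB m).symm).unique hB
    have hre2 : 0 ≤ (∑ j ∈ Finset.range n, f (η ^ j * ζ)).re := by
      rw [Complex.re_sum]
      exact Finset.sum_nonneg fun j _ => hre _ (hηζ j)
    rw [hkey] at hre2
    have : ((n:ℂ) * χ w).re = (n:ℝ) * (χ w).re := by
      simp [Complex.mul_re]
    rw [this] at hre2
    have hnpos : (0:ℝ) < n := by exact_mod_cast (by omega : 0 < n)
    nlinarith
  have := caratheodory_one hχrep havg (by simpa using him)
  simpa [mul_one] using this

section Omega

lemma omega_construction (F G : ℂ → ℂ) (k : ℝ)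
    (hF : DifferentiableOn ℂ F (ball (0:ℂ) 1))
    (hFa : AnalyticOnNhd ℂ F (ball (0:ℂ) 1))
    (hG : DifferentiableOn ℂ G (ball (0:ℂ) 1))
    (hdil : ∀ z : ℂ, ‖z‖ < 1 → ‖G z‖ ≤ k * ‖F z‖)
    (hne : ∃ z, ‖z‖ < 1 ∧ F z ≠ 0) :
    ∃ ω : ℂ → ℂ, DifferentiableOn ℂ ω (ball (0:ℂ) 1) ∧
      (∀ z : ℂ, ‖z‖ < 1 → ‖ω z‖ ≤ k) ∧ (∀ z : ℂ, ‖z‖ < 1 → G z = ω z * F z) := by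
  classical
  set q : ℂ → ℂ := fun w => G w / F w with hq
  set ω : ℂ → ℂ := fun z => limUnder (𝓝[≠] z) q with hω
  -- q is differentiable at points of the ball where F ≠ 0
  have hqdiff : ∀ z : ℂ, ‖z‖ < 1 → F z ≠ 0 → DifferentiableAt ℂ q z := by
    intro z hz hFz
    have hball : ball (0:ℂ) 1 ∈ 𝓝 z := (isOpen_ball).mem_nhds (mem_ball_zero_iff.mpr hz)
    exact ((hG.differentiableAt hball).div (hF.differentiableAt hball) hFz)
  have hωeq : ∀ z : ℂ, ‖z‖ < 1 → F z ≠ 0 → ω z = q z := by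
    intro z hz hFz
    apply Filter.Tendsto.limUnder_eq
    exact tendsto_nhdsWithin_of_tendsto_nhds (hqdiff z hz hFz).continuousAt.tendsto
  -- at zeros of F inside the ball, F is eventually nonzero on the punctured nhds
  have hevne : ∀ z₀ : ℂ, ‖z₀‖ < 1 → F z₀ = 0 → ∀ᶠ w in 𝓝[≠] z₀, F w ≠ 0 := by
    intro z₀ hz₀ hFz₀
    rcases (hFa z₀ (mem_ball_zero_iff.mpr hz₀)).eventually_eq_zero_or_eventually_ne_zero with hcase | hcase
    · exfalso
      obtain ⟨z, hz, hFz⟩ := hne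
      have := hFa.eqOn_zero_of_preconnected_of_eventuallyEq_zero
        (convex_ball (0:ℂ) 1).isPreconnected (mem_ball_zero_iff.mpr hz₀) (by
          filter_upwards [hcase] with w hw using hw)
      exact hFz (this (mem_ball_zero_iff.mpr hz))
    · exact hcase
  -- local structure at zeros of F: ω is differentiable there
  have hkey : ∀ z₀ : ℂ, ‖z₀‖ < 1 → F z₀ = 0 →
      ∃ δ > 0, ball z₀ δ ⊆ ball (0:ℂ) 1 ∧
        DifferentiableOn ℂ ω (ball z₀ δ) := by
    intro z₀ hz₀ hFz₀
    have h1 := hevne z₀ hz₀ hFz₀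
    rw [eventually_nhdsWithin_iff] at h1
    have h2 : ball (0:ℂ) 1 ∈ 𝓝 z₀ := isOpen_ball.mem_nhds (mem_ball_zero_iff.mpr hz₀)
    obtain ⟨δ, hδ0, hδ⟩ := Metric.mem_nhds_iff.mp (Filter.inter_mem h1 h2)
    refine ⟨δ, hδ0, fun w hw => (hδ hw).2, ?_⟩
    have hqd : DifferentiableOn ℂ q (ball z₀ δ \ {z₀}) := by
      intro w hw
      have hw1 := hδ hw.1
      have hFw : F w ≠ 0 := hw1.1 (by simpa using hw.2)
      exact (hqdiff w (mem_ball_zero_iff.mp hw1.2) hFw).differentiableWithinAt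
    have hqb : BddAbove (norm ∘ q '' (ball z₀ δ \ {z₀})) := by
      refine ⟨k, ?_⟩
      rintro x ⟨w, hw, rfl⟩
      have hw1 := hδ hw.1
      have hFw : F w ≠ 0 := hw1.1 (by simpa using hw.2)
      have hwball : ‖w‖ < 1 := mem_ball_zero_iff.mp hw1.2
      simp only [Function.comp_apply, hq, norm_div]
      rw [div_le_iff₀ (norm_pos_iff.mpr hFw)]
      exact hdil w hwball
    have hupd := Complex.differentiableOn_update_limUnder_of_bddAbove
      (isOpen_ball.mem_nhds (mem_ball_self hδ0)) hqd hqb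
    refine hupd.congr fun w hw => ?_
    rcases eq_or_ne w z₀ with rfl | hwne
    · rw [hω]
      simp [Function.update_self]
    · have hw1 := hδ hw
      have hFw : F w ≠ 0 := hw1.1 (by simpa using hwne)
      rw [hωeq w (mem_ball_zero_iff.mp hw1.2) hFw, Function.update_of_ne hwne]
  -- differentiability of ω on the ball
  have hωdiff : ∀ z : ℂ, ‖z‖ < 1 → DifferentiableAt ℂ ω z := by
    intro z hz
    rcases eq_or_ne (F z) 0 with hFz | hFz
    · obtain ⟨δ, hδ0, _, hd⟩ := hkey z hz hFz
      exact hd.differentiableAt (isOpen_ball.mem_nhds (mem_ball_self hδ0))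
    · have hev : ∀ᶠ w in 𝓝 z, ω w = q w := by
        have hFcont : ContinuousAt F z :=
          (hF.differentiableAt (isOpen_ball.mem_nhds (mem_ball_zero_iff.mpr hz))).continuousAt
      -- eventually F ≠ 0 and in ball
        have h1 : ∀ᶠ w in 𝓝 z, F w ≠ 0 := hFcont.eventually_ne hFz
        have h2 : ∀ᶠ w in 𝓝 z, ‖w‖ < 1 := by
          filter_upwards [isOpen_ball.eventually_mem (mem_ball_zero_iff.mpr hz)] with w hw
          exact mem_ball_zero_iff.mp hw
        filter_upwards [h1, h2] with w hw1 hw2 using hωeq w hw2 hw1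
      exact (hqdiff z hz hFz).congr_of_eventuallyEq hev
  refine ⟨ω, fun z hz => (hωdiff z (mem_ball_zero_iff.mp hz)).differentiableWithinAt, ?_, ?_⟩
  · -- norm bound
    intro z hz
    rcases eq_or_ne (F z) 0 with hFz | hFz
    · -- ω z is a limit of values of q of norm ≤ k
      have hcont : ContinuousAt ω z := (hωdiff z hz).continuousAt
      have htend : Tendsto ω (𝓝[≠] z) (𝓝 (ω z)) :=
        tendsto_nhdsWithin_of_tendsto_nhds hcont.tendsto
      have hev2 : ∀ᶠ w in 𝓝[≠] z, ‖ω w‖ ≤ k := by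
        have h1 := hevne z hz hFz
        have h2 : ∀ᶠ w in 𝓝[≠] z, ‖w‖ < 1 := by
          apply eventually_nhdsWithin_of_eventually_nhds
          filter_upwards [isOpen_ball.eventually_mem (mem_ball_zero_iff.mpr hz)] with w hw
          exact mem_ball_zero_iff.mp hw
        filter_upwards [h1, h2] with w hw1 hw2
        rw [hωeq w hw2 hw1]
        simp only [hq, norm_div]
        rw [div_le_iff₀ (norm_pos_iff.mpr hw1)]
        exact hdil w hw2
      exact le_of_tendsto htend.norm hev2
    · rw [hωeq z hz hFz]
      simp only [hq, norm_div]
      rw [div_le_iff₀ (norm_pos_iff.mpr hFz)]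
      exact hdil z hz
  · -- identity
    intro z hz
    rcases eq_or_ne (F z) 0 with hFz | hFz
    · have := hdil z hz
      rw [hFz] at *
      simp only [norm_zero, mul_zero] at this
      have hG0 : G z = 0 := by
        have := norm_le_zero_iff.mp this
        exact this
      rw [hG0, mul_zero]
    · rw [hωeq z hz hFz, hq]
      field_simp

end Omega

lemma BRep.const_sub_mul (hc : BRep c f) (w lam : ℂ) :
    BRep (fun n => if n = 0 then w - lam * c 0 else -(lam * c n))
      (fun z => w - lam * f z) := by
  intro z hz
  have h1 : HasSum (fun n : ℕ => (if n = 0 then w else 0) * z ^ n) w := by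
    have := hasSum_single (f := fun n : ℕ => (if n = 0 then w else 0) * z ^ n) 0
      (by intro b hb; simp [if_neg hb])
    simpa using this
  have h2 := (hc z hz).mul_left lam
  have h3 := h1.sub h2
  refine h3.congr_fun fun n => ?_
  rcases eq_or_ne n 0 with rfl | hn
  · simp
  · simp [hn]
    ring

lemma BRep.congr (hc : BRep c f) (hfg : ∀ z : ℂ, ‖z‖ < 1 → f z = g z) : BRep c g := by
  intro z hz
  rw [← hfg z hz]
  exact hc z hz

lemma bohr_arith {k u t R S Sb : ℝ} (hk0 : 0 ≤ k)
    (hu0 : 0 ≤ u) (huk : u ≤ k) (ht1 : 0 ≤ 1 - t) (hR0 : 0 ≤ R)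
    (hRle : R ≤ 1/(4+2*k)) (hS0 : 0 ≤ S)
    (hSle : S ≤ 2*(1-t)*R) (hSble : Sb ≤ u*S + 4*(1-t)*(k-u)*(R*R)) :
    t + 2*S + Sb ≤ 1 := by
  have hku : 0 ≤ k - u := by linarith
  have hA4 : (0:ℝ) < 4 + 2*k := by linarith
  have hkey : 2*(2+u)*R + 4*(k-u)*(R*R) ≤ 1 := by
    have h1 : 2*(2+u)*R ≤ 2*(2+u)*(1/(4+2*k)) :=
      mul_le_mul_of_nonneg_left hRle (by linarith)
    have h2 : 4*(k-u)*(R*R) ≤ 4*(k-u)*((1/(4+2*k))*(1/(4+2*k))) := by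
      apply mul_le_mul_of_nonneg_left _ (by linarith)
      apply mul_le_mul hRle hRle hR0 (by positivity)
    have h3 : 2*(2+u)*(1/(4+2*k)) + 4*(k-u)*((1/(4+2*k))*(1/(4+2*k))) ≤ 1 := by
      rw [← sub_nonneg]
      have e : 1 - (2*(2+u)*(1/(4+2*k)) + 4*(k-u)*((1/(4+2*k))*(1/(4+2*k))))
          = (4*(1+k)*(k-u)) / ((4+2*k)*(4+2*k)) := by
        field_simp
        ring
      rw [e]
      have h5 : (0:ℝ) ≤ 4*(1+k)*(k-u) := by nlinarith
      positivity
    linarith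
  have huS : u * S ≤ u * (2 * (1 - t) * R) := mul_le_mul_of_nonneg_left hSle hu0
  have hkey2 := mul_le_mul_of_nonneg_left hkey ht1
  nlinarith [hSble, hSle, hS0, hkey2]

/-- Bohr inequality for half-plane condition and quasiconformal dilation. -/
theorem halfplane_quasiconformal_bohr (h g : ℂ → ℂ) (a b : ℕ → ℂ) (k : ℝ)
    (hk0 : 0 ≤ k) (hk1 : k < 1)
    (hh : ∀ z : ℂ, ‖z‖ < 1 → HasSum (fun n => a n * z ^ n) (h z))
    (hg : ∀ z : ℂ, ‖z‖ < 1 → HasSum (fun n => b n * z ^ n) (g z))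
    (hb0 : b 0 = 0)
    (hre : ∀ z : ℂ, ‖z‖ < 1 → (h z).re ≤ 1)
    (ha0im : (a 0).im = 0) (ha0pos : 0 < (a 0).re) (ha0lt : (a 0).re < 1)
    (hdil : ∀ z : ℂ, ‖z‖ < 1 → ‖deriv g z‖ ≤ k * ‖deriv h z‖)
    (r : ℝ) (hr0 : 0 ≤ r) (hr : r ≤ 1 / (5 + 2 * k)) (z : ℂ) (hz : ‖z‖ = r) :
    ‖h z‖ + ∑' n : ℕ, (‖a (n + 1)‖ + ‖b (n + 1)‖) * r ^ (n + 1) ≤ 1 := by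
  have hha : BRep a h := fun w hw => hh w hw
  have hgb : BRep b g := fun w hw => hg w hw
  set t : ℝ := (a 0).re with ht
  have hk5 : (0:ℝ) < 5 + 2 * k := by linarith
  have hr1 : r < 1 := by
    apply lt_of_le_of_lt hr
    rw [div_lt_one hk5]
    linarith
  have hzball : ‖z‖ < 1 := by rw [hz]; exact hr1
  have ha0 : a 0 = (t : ℂ) := Complex.ext rfl (by simp [ha0im])
  have hnorma0 : ‖a 0‖ = t := by
    rw [ha0, Complex.norm_real, Real.norm_eq_abs, abs_of_pos ha0pos]
  -- coefficient bound for a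
  have hA : ∀ n : ℕ, 1 ≤ n → ‖a n‖ ≤ 2 * (1 - t) := by
    intro n hn
    have hrep := hha.const_sub_mul 1 1
    have hre2 : ∀ w : ℂ, ‖w‖ < 1 → 0 ≤ ((fun z => (1:ℂ) - 1 * h z) w).re := by
      intro w hw
      have := hre w hw
      simp only [one_mul, Complex.sub_re, Complex.one_re]
      linarith
    have him2 : ((fun n => if n = 0 then (1:ℂ) - 1 * a 0 else -(1 * a n)) 0).im = 0 := by
      simp [ha0im]
    have := caratheodory hrep hre2 him2 n hn
    rw [if_neg (by omega), if_pos rfl] at this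
    simpa [ht] using this
  -- summability and bound for the a-tail
  have hgeom : Summable (fun n : ℕ => r ^ (n + 1)) := by
    apply Summable.comp_injective (summable_geometric_of_lt_one hr0 hr1)
    exact fun x y hxy => by omega
  have hsum_a : Summable (fun n : ℕ => ‖a (n + 1)‖ * r ^ (n + 1)) := by
    apply Summable.of_nonneg_of_le (fun n => by positivity)
      (fun n => ?_) (hgeom.mul_left (2 * (1 - t)))
    exact mul_le_mul_of_nonneg_right (hA (n+1) (by omega)) (by positivity)
  set S : ℝ := ∑' n : ℕ, ‖a (n + 1)‖ * r ^ (n + 1) with hS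
  have htsum_geom : ∑' n : ℕ, r ^ (n + 1) = r / (1 - r) := by
    have h1 : ∀ n : ℕ, r ^ (n+1) = r * r ^ n := fun n => by ring
    rw [tsum_congr h1, tsum_mul_left, tsum_geometric_of_lt_one hr0 hr1]
    field_simp
  have hSle : S ≤ 2 * (1 - t) * (r / (1 - r)) := by
    rw [hS, ← htsum_geom, ← tsum_mul_left]
    apply Summable.tsum_le_tsum _ hsum_a (hgeom.mul_left _)
    intro n
    exact mul_le_mul_of_nonneg_right (hA (n+1) (by omega)) (by positivity)
  have hS0 : 0 ≤ S := tsum_nonneg fun n => by positivity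
  -- norm bound for h z
  have hhz : ‖h z‖ ≤ t + S := by
    rw [← (hha z hzball).tsum_eq]
    have h1 := norm_tsum_le_tsum_norm (hha.summable_norm hzball)
    apply le_trans h1
    rw [Summable.tsum_eq_zero_add (hha.summable_norm hzball)]
    simp only [pow_zero, mul_one]
    have h2 : ∀ n : ℕ, ‖a (n+1) * z ^ (n+1)‖ = ‖a (n+1)‖ * r ^ (n+1) := by
      intro n
      rw [norm_mul, norm_pow, hz]
    rw [tsum_congr h2, hnorma0]
  by_cases hF0 : ∀ w : ℂ, ‖w‖ < 1 → deriv h w = 0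
  · -- degenerate case: h is constant
    have hzero : BRep (fun _ : ℕ => (0:ℂ)) (deriv h) := by
      intro w hw
      rw [hF0 w hw]
      simpa using hasSum_zero
    have huniq := hha.deriv.unique hzero
    have han : ∀ n : ℕ, a (n+1) = 0 := by
      intro n
      have := congrFun huniq n
      exact (mul_eq_zero.mp this).resolve_left (Nat.cast_add_one_ne_zero n)
    have hgzero : BRep (fun _ : ℕ => (0:ℂ)) (deriv g) := by
      intro w hw
      have := hdil w hw
      rw [hF0 w hw] at this
      simp only [norm_zero, mul_zero] at this
      rw [norm_le_zero_iff.mp this]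
      simpa using hasSum_zero
    have hbn : ∀ n : ℕ, b (n+1) = 0 := by
      intro n
      have := congrFun (hgb.deriv.unique hgzero) n
      exact (mul_eq_zero.mp this).resolve_left (Nat.cast_add_one_ne_zero n)
    have hzero2 : ∑' n : ℕ, (‖a (n + 1)‖ + ‖b (n + 1)‖) * r ^ (n + 1) = 0 := by
      convert tsum_zero with n
      rw [han n, hbn n]
      simp
    have hS0' : S = 0 := by
      rw [hS]
      convert tsum_zero with n
      rw [han n]
      simp
    rw [hzero2]
    rw [hS0'] at hhz
    simpa using le_trans hhz (by linarith)
  · -- main case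
    push_neg at hF0
    obtain ⟨w0, hw0, hw0ne⟩ := hF0
    obtain ⟨ω, hωdiff, hωbound, hωid⟩ := omega_construction (deriv h) (deriv g) k
      hha.deriv.differentiableOn hha.deriv.analyticOnNhd hgb.deriv.differentiableOn
      hdil ⟨w0, hw0, hw0ne⟩
    obtain ⟨W, hWrep⟩ := brep_of_differentiableOn hωdiff
    set u : ℝ := ‖W 0‖ with hu
    have huk : u ≤ k := by
      rw [hu, ← hWrep.map_zero]
      exact hωbound 0 (by norm_num)
    have hu0 : 0 ≤ u := norm_nonneg _
    -- coefficient bound for W via Caratheodory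
    have hWb : ∀ n : ℕ, 1 ≤ n → ‖W n‖ ≤ 2 * (k - u) := by
      intro n hn
      set lam : ℂ := if W 0 = 0 then 1 else W 0 / (‖W 0‖ : ℂ) with hlam
      have hlamnorm : ‖lam‖ = 1 := by
        rw [hlam]
        split_ifs with h0
        · simp
        · rw [norm_div, Complex.norm_real, Real.norm_eq_abs, abs_of_pos (norm_pos_iff.mpr h0),
            div_self (norm_pos_iff.mpr h0).ne']
      have hlamW0 : (starRingEnd ℂ) lam * W 0 = (u : ℂ) := by
        rw [hlam]
        split_ifs with h0
        · simp [h0, hu]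
        · have hn : ((‖W 0‖:ℝ):ℂ) ≠ 0 := by exact_mod_cast (norm_pos_iff.mpr h0).ne'
          rw [hu, map_div₀, Complex.conj_ofReal, div_mul_eq_mul_div, mul_comm,
            Complex.mul_conj, Complex.normSq_eq_norm_sq,
            div_eq_iff hn, sq, Complex.ofReal_mul]
      have hψ := hWrep.const_sub_mul (k:ℂ) ((starRingEnd ℂ) lam)
      have hreψ : ∀ w : ℂ, ‖w‖ < 1 → 0 ≤ ((fun z => (k:ℂ) - (starRingEnd ℂ) lam * ω z) w).re := by
        intro w hw
        simp only [Complex.sub_re, Complex.ofReal_re]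
        have h1 : ((starRingEnd ℂ) lam * ω w).re ≤ ‖(starRingEnd ℂ) lam * ω w‖ :=
          Complex.re_le_norm _
        have h2 : ‖(starRingEnd ℂ) lam * ω w‖ = ‖ω w‖ := by
          rw [norm_mul, RCLike.norm_conj, hlamnorm, one_mul]
        have := hωbound w hw
        linarith [h1, h2 ▸ h1]
      have himψ : ((fun n => if n = 0 then (k:ℂ) - (starRingEnd ℂ) lam * W 0
          else -((starRingEnd ℂ) lam * W n)) 0).im = 0 := by
        simp [hlamW0]
      have hcar := caratheodory hψ hreψ himψ n hn
      rw [if_neg (by omega)] at hcar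
      rw [if_pos rfl] at hcar
      have hre0 : ((k:ℂ) - (starRingEnd ℂ) lam * W 0).re = k - u := by
        rw [hlamW0]
        simp
      rw [hre0] at hcar
      rw [norm_neg, norm_mul, RCLike.norm_conj, hlamnorm, one_mul] at hcar
      exact hcar
    -- convolution identity
    have hprod := hWrep.mul hha.deriv
    have hgW : BRep (fun n => ((n:ℂ)+1) * b (n+1)) (fun w => ω w * deriv h w) :=
      hgb.deriv.congr (fun w hw => hωid w hw)
    have hconv := hgW.unique hprod
    -- coefficient bound for b
    have ht1 : 0 ≤ 1 - t := by linarith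
    have hku : 0 ≤ k - u := by linarith
    have hB : ∀ n : ℕ, ‖b (n+1)‖ ≤ u * ‖a (n+1)‖ + 4 * (1 - t) * (k - u) * n := by
      intro n
      have hid := congrFun hconv n
      have hl : ‖((n:ℂ)+1) * b (n+1)‖ = ((n:ℝ)+1) * ‖b (n+1)‖ := by
        rw [norm_mul]
        congr 1
        have he : ((n:ℂ)+1) = ((n+1 : ℕ) : ℂ) := by push_cast; ring
        rw [he, Complex.norm_natCast]
        push_cast; ring
      have hub : ‖∑ j ∈ Finset.range (n+1), W j * ((((n-j:ℕ):ℂ)+1) * a ((n-j)+1))‖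
          ≤ u * (((n:ℝ)+1) * ‖a (n+1)‖) + (n:ℝ) * (2*(k-u) * ((n:ℝ) * (2*(1-t)))) := by
        refine le_trans (norm_sum_le _ _) ?_
        rw [Finset.sum_range_succ']
        rw [add_comm]
        apply add_le_add
        · -- the j = 0 term
          rw [Nat.sub_zero, norm_mul, norm_mul]
          have he : ((n:ℂ)+1) = ((n+1 : ℕ) : ℂ) := by push_cast; ring
          rw [he, Complex.norm_natCast]
          apply le_of_eq
          push_cast
          ring
        · -- the rest
          have hcard : ∀ j ∈ Finset.range n,
              ‖W (j+1) * ((((n-(j+1):ℕ):ℂ)+1) * a ((n-(j+1))+1))‖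
              ≤ 2*(k-u) * ((n:ℝ) * (2*(1-t))) := by
            intro j hj
            have hjn : j < n := Finset.mem_range.mp hj
            set m : ℕ := n - (j+1) with hm
            have hm1 : (m:ℝ) + 1 ≤ (n:ℝ) := by
              have : m + 1 ≤ n := by omega
              exact_mod_cast this
            rw [norm_mul, norm_mul]
            have he : ((m:ℂ)+1) = ((m+1 : ℕ) : ℂ) := by push_cast; ring
            rw [he, Complex.norm_natCast]
            have h1 : ‖W (j+1)‖ ≤ 2*(k-u) := hWb (j+1) (by omega)
            have h2 : ‖a (m+1)‖ ≤ 2*(1-t) := hA (m+1) (by omega)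
            have h3 : ((m+1:ℕ):ℝ) * ‖a (m+1)‖ ≤ (n:ℝ) * (2*(1-t)) := by
              apply mul_le_mul (by exact_mod_cast hm1) h2 (norm_nonneg _)
              positivity
            apply mul_le_mul h1 h3 (by positivity) (by positivity)
          refine le_trans (Finset.sum_le_card_nsmul _ _ _ hcard) ?_
          rw [Finset.card_range, nsmul_eq_mul]
      have hfin : ((n:ℝ)+1) * ‖b (n+1)‖ ≤
          ((n:ℝ)+1) * (u * ‖a (n+1)‖ + 4 * (1 - t) * (k - u) * n) := by
        rw [← hl, hid]
        refine le_trans hub ?_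
        have hn0 : (0:ℝ) ≤ n := Nat.cast_nonneg n
        nlinarith [mul_nonneg (mul_nonneg hku ht1) hn0, norm_nonneg (a (n+1))]
      have hpos : (0:ℝ) < (n:ℝ)+1 := by positivity
      exact le_of_mul_le_mul_left (by linarith [hfin]) hpos
    -- summability for b-tail
    have hsum_n : Summable (fun n : ℕ => (n:ℝ) * r^(n+1)) := by
      have h1 : Summable (fun n : ℕ => (n:ℝ) * r^n) := by
        have := summable_pow_mul_geometric_of_norm_lt_one 1 (by
          rw [Real.norm_eq_abs, abs_of_nonneg hr0]; exact hr1)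
        simpa using this
      have h2 := h1.mul_left r
      refine h2.congr fun n => ?_
      ring
    have hsum_b : Summable (fun n : ℕ => ‖b (n+1)‖ * r^(n+1)) := by
      apply Summable.of_nonneg_of_le (fun n => by positivity) (fun n => ?_)
        (((hsum_a.mul_left u).add (hsum_n.mul_left (4 * (1 - t) * (k - u)))))
      calc ‖b (n+1)‖ * r^(n+1) ≤ (u * ‖a (n+1)‖ + 4 * (1 - t) * (k - u) * n) * r^(n+1) :=
            mul_le_mul_of_nonneg_right (hB n) (by positivity)
        _ = u * (‖a (n+1)‖ * r^(n+1)) + 4 * (1 - t) * (k - u) * ((n:ℝ) * r^(n+1)) := by ring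
    set Sb : ℝ := ∑' n : ℕ, ‖b (n+1)‖ * r^(n+1) with hSbdef
    set R : ℝ := r / (1 - r) with hR
    have h1r : (0:ℝ) < 1 - r := by linarith
    have hR0 : 0 ≤ R := by positivity
    have htsum_n : ∑' n : ℕ, (n:ℝ) * r^(n+1) = r * (r / (1-r)^2) := by
      have h1 : ∀ n : ℕ, (n:ℝ) * r^(n+1) = r * ((n:ℝ) * r^n) := fun n => by ring
      rw [tsum_congr h1, tsum_mul_left]
      congr 1
      have := tsum_coe_mul_geometric_of_norm_lt_one (r := r) (by
        rw [Real.norm_eq_abs, abs_of_nonneg hr0]; exact hr1)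
      exact_mod_cast this
    have hSble : Sb ≤ u * S + 4 * (1 - t) * (k - u) * (R * R) := by
      have hbound : Sb ≤ u * S + 4 * (1 - t) * (k - u) * (r * (r / (1-r)^2)) := by
        rw [hSbdef, hS, ← htsum_n, ← tsum_mul_left, ← tsum_mul_left, ← Summable.tsum_add
          (hsum_a.mul_left u) (hsum_n.mul_left _)]
        apply Summable.tsum_le_tsum _ hsum_b ((hsum_a.mul_left u).add (hsum_n.mul_left _))
        intro n
        calc ‖b (n+1)‖ * r^(n+1) ≤ (u * ‖a (n+1)‖ + 4 * (1 - t) * (k - u) * n) * r^(n+1) :=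
              mul_le_mul_of_nonneg_right (hB n) (by positivity)
          _ = u * (‖a (n+1)‖ * r^(n+1)) + 4 * (1 - t) * (k - u) * ((n:ℝ) * r^(n+1)) := by ring
      have hRR : r * (r / (1-r)^2) = R * R := by
        rw [hR, div_mul_div_comm, pow_two, ← mul_div_assoc]
      rwa [hRR] at hbound
    have hSb0 : 0 ≤ Sb := tsum_nonneg fun n => by positivity
    -- split the goal tsum
    have hsplit : ∑' n : ℕ, (‖a (n + 1)‖ + ‖b (n + 1)‖) * r ^ (n + 1) = S + Sb := by
      rw [hS, hSbdef, ← Summable.tsum_add hsum_a hsum_b]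
      apply tsum_congr
      intro n
      ring
    rw [hsplit]
    -- the radius bound
    have hRle : R ≤ 1 / (4 + 2*k) := by
      rw [hR, div_le_div_iff₀ h1r (by linarith)]
      have : r * (5 + 2*k) ≤ 1 := by
        rw [← le_div_iff₀ hk5]
        exact hr
      nlinarith
    have hfinal : t + 2*S + Sb ≤ 1 :=
      bohr_arith hk0 hu0 huk ht1 hR0 hRle hS0 hSle hSble
    linarith [hhz, hfinal]
end BohrAux2
end
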